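/- Let R^n be a ring, j a vertex with t(j)=1, and let R_{j,2}^n be the path obtained by splitting j into two endpoints j and j', both assigned threshold 2 (all other thresholds unchanged). Then for any TWC target set S' of the path R_{j,2}^n (which necessarily contains j and j'), the set S' \ {j'} (identifying j' with j) is a TWC target set for the ring R^n containing j; conversely, any TWC target set of R^n containing j yields a TWC target set of R_{j,2}^n of size one larger by adding j'. -/

import Mathlib

/-!
Both ends of the path have degree 1 and threshold 2, so they lie in every target set.  Once
both copies of `j` are seeds, the projection `toRing` from the path onto the ring is, away from
them, a local isomorphism preserving thresholds: it maps the two path neighbours of a vertex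
bijectively onto its two ring neighbours (this needs `n ≥ 3`).  Hence, by induction on the
round, a path vertex is influenced exactly when its image in the ring is, for any window size.
-/

set_option linter.unusedVariables false

open Finset

variable {V : Type*} [Fintype V] [DecidableEq V]

/-- `influenced G t lam S r` : set of influenced nodes after round `r`. -/
def influenced (G : SimpleGraph V) [DecidableRel G.Adj] (t : V → ℕ) (lam : ℕ)
    (S : Finset V) : ℕ → Finset V
  | 0 => S
  | r + 1 =>
    let prev := influenced G t lam S r
    let A := if r + 1 ≤ lam then prev else prev \ influenced G t lam S (r - lam)
    prev ∪ Finset.univ.filter fun v => t v ≤ (G.neighborFinset v ∩ A).card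
  termination_by r => r
  decreasing_by all_goals omega

/-- `activeSet G t lam S r` : set of active nodes at round `r`. -/
def activeSet (G : SimpleGraph V) [DecidableRel G.Adj] (t : V → ℕ) (lam : ℕ)
    (S : Finset V) (r : ℕ) : Finset V :=
  if r = 0 then ∅
  else if r ≤ lam then influenced G t lam S (r - 1)
  else influenced G t lam S (r - 1) \ influenced G t lam S (r - 1 - lam)

def isTargetSet (G : SimpleGraph V) [DecidableRel G.Adj] (t : V → ℕ) (lam : ℕ)
    (S : Finset V) : Prop :=
  ∃ r, influenced G t lam S r = Finset.univ

def pathGraph (n : ℕ) : SimpleGraph (Fin n) where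
  Adj i j := i.val + 1 = j.val ∨ j.val + 1 = i.val
  symm := ⟨fun i j h => h.symm⟩
  loopless := ⟨fun i h => by rcases h with h | h <;> omega⟩

instance (n : ℕ) : DecidableRel (pathGraph n).Adj :=
  fun i j => inferInstanceAs (Decidable (i.val + 1 = j.val ∨ j.val + 1 = i.val))

def ringGraph (n : ℕ) : SimpleGraph (Fin n) where
  Adj i j := i ≠ j ∧ ((i.val + 1) % n = j.val ∨ (j.val + 1) % n = i.val)
  symm := ⟨fun i j h => ⟨h.1.symm, h.2.symm⟩⟩
  loopless := ⟨fun i h => h.1 rfl⟩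

instance (n : ℕ) : DecidableRel (ringGraph n).Adj :=
  fun i j => inferInstanceAs (Decidable (_ ∧ (_ ∨ _)))

instance : DecidableRel (⊤ : SimpleGraph V).Adj :=
  fun a b => inferInstanceAs (Decidable (a ≠ b))


/-- Thresholds of the path `R_{j,2}^n` obtained by splitting the ring at `j`:
the two endpoints (positions `0` and `n`, both copies of `j`) get threshold 2,
and position `k` (`0 < k < n`) gets the threshold of ring vertex `j + k`. -/
def splitT (n : ℕ) (t : Fin n → ℕ) (j : Fin n) : Fin (n + 1) → ℕ :=
  fun k => if h : (k : ℕ) = 0 ∨ (k : ℕ) = n then 2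
           else t (j + ⟨(k : ℕ), by have := k.isLt; omega⟩)

/-- Map from path positions back to ring vertices (both endpoints map to `j`). -/
def toRing (n : ℕ) (hn : 0 < n) (j : Fin n) : Fin (n + 1) → Fin n :=
  fun k => j + ⟨(k : ℕ) % n, Nat.mod_lt _ hn⟩

/-- Map from ring vertices to path positions. -/
def toPath (n : ℕ) (j : Fin n) : Fin n → Fin (n + 1) :=
  fun v => ⟨((v - j : Fin n) : ℕ), by have := (v - j).isLt; omega⟩

section Diffusion

variable {G : SimpleGraph V} [DecidableRel G.Adj] {t : V → ℕ} {lam : ℕ} {S : Finset V}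

theorem influenced_zero : influenced G t lam S 0 = S := by
  rw [influenced]

theorem influenced_succ (r : ℕ) :
    influenced G t lam S (r + 1) = influenced G t lam S r ∪
      univ.filter fun v => t v ≤ (G.neighborFinset v ∩ activeSet G t lam S (r + 1)).card := by
  rw [influenced]
  simp [activeSet]

theorem subset_influenced (r : ℕ) : S ⊆ influenced G t lam S r := by
  induction r with
  | zero => rw [influenced_zero]
  | succ r ih => rw [influenced_succ]; exact ih.trans subset_union_left

theorem mem_of_mem_influenced_of_degree_lt {v : V} (hv : G.degree v < t v) {r : ℕ}
    (h : v ∈ influenced G t lam S r) : v ∈ S := by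
  induction r with
  | zero => rwa [influenced_zero] at h
  | succ r ih =>
    rw [influenced_succ, mem_union, mem_filter] at h
    rcases h with h | ⟨-, hle⟩
    · exact ih h
    · have := card_le_card (s := G.neighborFinset v ∩ activeSet G t lam S (r + 1)) inter_subset_left
      rw [G.card_neighborFinset_eq_degree] at this
      omega

theorem mem_of_isTargetSet_of_degree_lt (hS : isTargetSet G t lam S) {v : V}
    (hv : G.degree v < t v) : v ∈ S :=
  let ⟨_, hr⟩ := hS
  mem_of_mem_influenced_of_degree_lt hv (hr ▸ mem_univ v)

theorem card_inter_eq_of_bijOn {α β : Type*} [DecidableEq α] [DecidableEq β] {f : α → β}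
    {s A : Finset α} {s' B : Finset β} (hf : Set.BijOn f s s') (hAB : ∀ x, x ∈ A ↔ f x ∈ B) :
    (s ∩ A).card = (s' ∩ B).card := by
  have h : Set.BijOn f ↑(s ∩ A) ↑(s' ∩ B) := by
    rw [coe_inter, coe_inter]
    exact hf.inter_mapsTo (fun x hx => (hAB x).1 hx) (fun x hx => (hAB x).2 hx.2)
  exact card_nbij f h.mapsTo h.injOn h.surjOn

theorem mem_influenced_iff_of_bijOn_neighborSet {W : Type*} [Fintype W] [DecidableEq W]
    {H : SimpleGraph W} [DecidableRel H.Adj] {s : W → ℕ} {T : Finset W} (f : W → V)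
    (hseed : ∀ w, w ∈ T ↔ f w ∈ S)
    (hlocal : ∀ w, f w ∉ S →
      s w = t (f w) ∧ Set.BijOn f (H.neighborSet w) (G.neighborSet (f w)))
    (r : ℕ) (w : W) : w ∈ influenced H s lam T r ↔ f w ∈ influenced G t lam S r := by
  induction r using Nat.strong_induction_on generalizing w with
  | _ r ih =>
  match r with
  | 0 => rw [influenced_zero, influenced_zero, hseed]
  | r + 1 =>
    by_cases hw : f w ∈ S
    · exact iff_of_true (subset_influenced _ ((hseed w).2 hw)) (subset_influenced _ hw)
    obtain ⟨hs, hbij⟩ := hlocal w hw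
    have hactive : ∀ x,
        x ∈ activeSet H s lam T (r + 1) ↔ f x ∈ activeSet G t lam S (r + 1) := by
      intro x
      simp only [activeSet, Nat.add_one_ne_zero, if_false, Nat.add_sub_cancel]
      split_ifs <;> simp only [mem_sdiff, ih r (by omega), ih (r - lam) (by omega)]
    have hcard := card_inter_eq_of_bijOn (s := H.neighborFinset w) (s' := G.neighborFinset (f w))
      (by simpa only [SimpleGraph.coe_neighborFinset] using hbij) hactive
    rw [influenced_succ, influenced_succ]
    simp only [mem_union, mem_filter, mem_univ, true_and, ih r (by omega), hs, hcard]

end Diffusion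

theorem pathGraph_adj {m : ℕ} {a b : Fin m} :
    (pathGraph m).Adj a b ↔ a.val + 1 = b.val ∨ b.val + 1 = a.val :=
  Iff.rfl

theorem pathGraph_degree_zero_le_one (m : ℕ) : (pathGraph (m + 1)).degree 0 ≤ 1 := by
  rw [← SimpleGraph.card_neighborFinset_eq_degree, card_le_one]
  intro a ha b hb
  rw [SimpleGraph.mem_neighborFinset, pathGraph_adj] at ha hb
  exact Fin.ext (by simp only [Fin.val_zero] at ha hb; omega)

theorem pathGraph_degree_last_le_one (m : ℕ) : (pathGraph (m + 1)).degree (Fin.last m) ≤ 1 := by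
  rw [← SimpleGraph.card_neighborFinset_eq_degree, card_le_one]
  intro a ha b hb
  rw [SimpleGraph.mem_neighborFinset, pathGraph_adj] at ha hb
  exact Fin.ext (by simp only [Fin.val_last] at ha hb; omega)

section Split

open Fin.NatCast

variable {n : ℕ}

theorem ringGraph_adj_iff [NeZero n] {u v : Fin n} :
    (ringGraph n).Adj u v ↔ u ≠ v ∧ (v = u + 1 ∨ u = v + 1) := by
  simp only [ringGraph, Fin.ext_iff, Fin.val_add, Fin.val_one', Nat.add_mod_mod, eq_comm]

theorem toRing_eq_add [NeZero n] (j : Fin n) (k : Fin (n + 1)) :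
    toRing n n.pos_of_neZero j k = j + (k.val : Fin n) :=
  rfl

theorem toRing_zero [NeZero n] (j : Fin n) : toRing n n.pos_of_neZero j 0 = j := by
  simp [toRing_eq_add]

theorem toRing_last [NeZero n] (j : Fin n) : toRing n n.pos_of_neZero j (Fin.last n) = j := by
  simp [toRing_eq_add]

theorem toRing_of_val_add_one [NeZero n] (j : Fin n) {a b : Fin (n + 1)} (h : a.val + 1 = b.val) :
    toRing n n.pos_of_neZero j b = toRing n n.pos_of_neZero j a + 1 := by
  simp only [toRing_eq_add, ← h, Nat.cast_succ, add_assoc]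

theorem toRing_toPath [NeZero n] (j v : Fin n) : toRing n n.pos_of_neZero j (toPath n j v) = v := by
  simp [toRing_eq_add, toPath]

theorem toPath_toRing [NeZero n] (j : Fin n) {k : Fin (n + 1)} (hk : k ≠ Fin.last n) :
    toPath n j (toRing n n.pos_of_neZero j k) = k := by
  have : k.val < n := Fin.val_lt_last hk
  ext
  simp [toRing_eq_add, toPath, Nat.mod_eq_of_lt this]

theorem toPath_self [NeZero n] (j : Fin n) : toPath n j j = 0 := by
  ext
  simp [toPath]

theorem toPath_ne_last (j v : Fin n) : toPath n j v ≠ Fin.last n :=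
  Fin.ne_of_lt (v - j).isLt

theorem toPath_injective [NeZero n] (j : Fin n) : Function.Injective (toPath n j) :=
  Function.LeftInverse.injective (toRing_toPath j)

theorem splitT_endpoint (t : Fin n → ℕ) (j : Fin n) {k : Fin (n + 1)}
    (hk : k = 0 ∨ k = Fin.last n) : splitT n t j k = 2 := by
  rcases hk with rfl | rfl <;> simp [splitT]

theorem pathGraph_degree_lt_splitT (t : Fin n → ℕ) (j : Fin n) {k : Fin (n + 1)}
    (hk : k = 0 ∨ k = Fin.last n) : (pathGraph (n + 1)).degree k < splitT n t j k := by
  rw [splitT_endpoint t j hk, Nat.lt_succ_iff]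
  rcases hk with rfl | rfl
  exacts [pathGraph_degree_zero_le_one n, pathGraph_degree_last_le_one n]

theorem splitT_of_ne [NeZero n] (t : Fin n → ℕ) (j : Fin n) {k : Fin (n + 1)} (h0 : k ≠ 0)
    (hlast : k ≠ Fin.last n) : splitT n t j k = t (toRing n n.pos_of_neZero j k) := by
  have h0' : k.val ≠ 0 := Fin.val_ne_iff.2 h0
  have hlt : k.val < n := Fin.val_lt_last hlast
  simp only [splitT, h0', hlt.ne, or_self, dite_false, toRing_eq_add]
  congr 2
  ext
  simp [Nat.mod_eq_of_lt hlt]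

theorem add_natCast_ne_self [NeZero n] {m : ℕ} (h0 : 0 < m) (hm : m < n) (u : Fin n) :
    u + (m : Fin n) ≠ u := by
  rw [Ne, add_eq_left, Fin.natCast_eq_zero]
  exact fun h => absurd (Nat.le_of_dvd h0 h) (by omega)

theorem add_one_ne_self [NeZero n] (hn : 2 ≤ n) (u : Fin n) : u + 1 ≠ u := by
  simpa using add_natCast_ne_self (m := 1) one_pos hn u

theorem add_one_add_one_ne_self [NeZero n] (hn : 3 ≤ n) (u : Fin n) : u + 1 + 1 ≠ u := by
  simpa [add_assoc, one_add_one_eq_two] using add_natCast_ne_self (m := 2) two_pos hn u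

theorem ringGraph_adj_toRing_of_pathGraph_adj [NeZero n] (hn : 2 ≤ n) (j : Fin n)
    {a b : Fin (n + 1)} (h : (pathGraph (n + 1)).Adj a b) :
    (ringGraph n).Adj (toRing n n.pos_of_neZero j a) (toRing n n.pos_of_neZero j b) := by
  rw [ringGraph_adj_iff]
  rcases h with h | h <;> rw [toRing_of_val_add_one j h]
  · exact ⟨(add_one_ne_self hn _).symm, Or.inl rfl⟩
  · exact ⟨add_one_ne_self hn _, Or.inr rfl⟩

theorem bijOn_toRing_neighborSet [NeZero n] (hn : 3 ≤ n) (j : Fin n) {k : Fin (n + 1)}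
    (h0 : k ≠ 0) (hlast : k ≠ Fin.last n) :
    Set.BijOn (toRing n n.pos_of_neZero j) ((pathGraph (n + 1)).neighborSet k)
      ((ringGraph n).neighborSet (toRing n n.pos_of_neZero j k)) := by
  have h0' : k.val ≠ 0 := Fin.val_ne_iff.2 h0
  have hlt : k.val < n := Fin.val_lt_last hlast
  refine ⟨fun a ha => ringGraph_adj_toRing_of_pathGraph_adj (by omega) j ha,
    fun a ha b hb hab => ?_, fun v hv => ?_⟩
  · rcases ha with ha | ha <;> rcases hb with hb | hb
    · exact Fin.ext (by omega)
    · refine absurd ?_ (add_one_add_one_ne_self hn (toRing n n.pos_of_neZero j b))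
      rw [← toRing_of_val_add_one j hb, ← toRing_of_val_add_one j ha, hab]
    · refine absurd ?_ (add_one_add_one_ne_self hn (toRing n n.pos_of_neZero j a))
      rw [← toRing_of_val_add_one j ha, ← toRing_of_val_add_one j hb, hab]
    · exact Fin.ext (by omega)
  · rcases (ringGraph_adj_iff.1 hv).2 with rfl | hv
    · exact ⟨⟨k.val + 1, by omega⟩, Or.inl rfl, toRing_of_val_add_one j (a := k) rfl⟩
    · refine ⟨⟨k.val - 1, by omega⟩, Or.inr (by simp only; omega), add_right_cancel (b := 1) ?_⟩
      rw [← hv]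
      exact (toRing_of_val_add_one j (b := k) (by simp only; omega)).symm

/-- The seed set `S ∪ {j'}` of the path `R_{j,2}^n`. -/
def splitSeeds (n : ℕ) (j : Fin n) (S : Finset (Fin n)) : Finset (Fin (n + 1)) :=
  insert (Fin.last n) (S.image (toPath n j))

theorem card_splitSeeds [NeZero n] (j : Fin n) (S : Finset (Fin n)) :
    (splitSeeds n j S).card = S.card + 1 := by
  rw [splitSeeds, card_insert_of_notMem, card_image_of_injective _ (toPath_injective j)]
  simpa only [mem_image, not_exists, not_and] using fun v _ => toPath_ne_last j v

theorem mem_splitSeeds_iff [NeZero n] {j : Fin n} {S : Finset (Fin n)} (hj : j ∈ S)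
    (k : Fin (n + 1)) : k ∈ splitSeeds n j S ↔ toRing n n.pos_of_neZero j k ∈ S := by
  by_cases hk : k = Fin.last n
  · simp [splitSeeds, hk, toRing_last, hj]
  · simp only [splitSeeds, mem_insert, hk, false_or, mem_image]
    constructor
    · rintro ⟨v, hv, rfl⟩
      rwa [toRing_toPath]
    · exact fun h => ⟨_, h, toPath_toRing j hk⟩

theorem splitSeeds_image_toRing [NeZero n] (j : Fin n) {S' : Finset (Fin (n + 1))}
    (h0 : 0 ∈ S') (hlast : Fin.last n ∈ S') :
    splitSeeds n j (S'.image (toRing n n.pos_of_neZero j)) = S' := by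
  have hj : j ∈ S'.image (toRing n n.pos_of_neZero j) := mem_image.2 ⟨_, hlast, toRing_last j⟩
  ext k
  rw [mem_splitSeeds_iff hj, mem_image]
  refine ⟨fun ⟨x, hx, hxk⟩ => ?_, fun hk => ⟨k, hk, rfl⟩⟩
  by_cases hk : k = Fin.last n
  · exact hk ▸ hlast
  by_cases hx' : x = Fin.last n
  · rwa [← toPath_toRing j hk, ← hxk, hx', toRing_last, toPath_self]
  · rwa [← toPath_toRing j hk, ← hxk, toPath_toRing j hx']

theorem mem_influenced_splitSeeds_iff [NeZero n] (hn : 3 ≤ n) (t : Fin n → ℕ) (lam : ℕ)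
    {j : Fin n} {S : Finset (Fin n)} (hj : j ∈ S) (r : ℕ) (k : Fin (n + 1)) :
    k ∈ influenced (pathGraph (n + 1)) (splitT n t j) lam (splitSeeds n j S) r ↔
      toRing n n.pos_of_neZero j k ∈ influenced (ringGraph n) t lam S r := by
  refine mem_influenced_iff_of_bijOn_neighborSet _ (mem_splitSeeds_iff hj) (fun k hk => ?_) r k
  have h0 : k ≠ 0 := by rintro rfl; exact hk (by rwa [toRing_zero])
  have hlast : k ≠ Fin.last n := by rintro rfl; exact hk (by rwa [toRing_last])
  exact ⟨splitT_of_ne t j h0 hlast, bijOn_toRing_neighborSet hn j h0 hlast⟩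

end Split

/-- splitting the ring at a threshold-1 vertex `j`.  Any TWC target
set `S'` of the path `R_{j,2}^n` projects (identifying `j'` with `j`) to a TWC
target set of the ring containing `j`, of size `|S'| − 1`; conversely any TWC
target set of the ring containing `j` lifts, by adding the endpoint `j'`, to a
TWC target set of the path of size one larger. -/
theorem stmt16 (n lam : ℕ) (hn : 3 ≤ n) (t : Fin n → ℕ)
    (j : Fin n) :
    (∀ S' : Finset (Fin (n + 1)),
      isTargetSet (pathGraph (n + 1)) (splitT n t j) lam S' →
        isTargetSet (ringGraph n) t lam (S'.image (toRing n (by omega) j)) ∧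
        j ∈ S'.image (toRing n (by omega) j) ∧
        (S'.image (toRing n (by omega) j)).card = S'.card - 1) ∧
    (∀ S : Finset (Fin n), isTargetSet (ringGraph n) t lam S → j ∈ S →
      isTargetSet (pathGraph (n + 1)) (splitT n t j) lam
        (insert (⟨n, by omega⟩ : Fin (n + 1)) (S.image (toPath n j))) ∧
      (insert (⟨n, by omega⟩ : Fin (n + 1)) (S.image (toPath n j))).card
        = S.card + 1) := by
  have : NeZero n := ⟨by omega⟩
  refine ⟨fun S' hS' => ?_, fun S ⟨r, hr⟩ hjS => ?_⟩
  · have h0 := mem_of_isTargetSet_of_degree_lt hS' (pathGraph_degree_lt_splitT t j (Or.inl rfl))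
    have hlast :=
      mem_of_isTargetSet_of_degree_lt hS' (pathGraph_degree_lt_splitT t j (Or.inr rfl))
    obtain ⟨r, hr⟩ := hS'
    have hseeds := splitSeeds_image_toRing j h0 hlast
    have hjS : j ∈ S'.image (toRing n n.pos_of_neZero j) := mem_image.2 ⟨_, hlast, toRing_last j⟩
    refine ⟨⟨r, eq_univ_of_forall fun v => ?_⟩, hjS, ?_⟩
    · rw [← toRing_toPath j v, ← mem_influenced_splitSeeds_iff hn t lam hjS, hseeds, hr]
      exact mem_univ _
    · have hcard := card_splitSeeds j (S'.image (toRing n n.pos_of_neZero j))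
      rw [hseeds] at hcard
      omega
  · exact ⟨⟨r, eq_univ_of_forall fun k =>
      (mem_influenced_splitSeeds_iff hn t lam hjS r k).2 (hr ▸ mem_univ _)⟩, card_splitSeeds j S⟩
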